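/- Fix E > 0. Let {A_i} be a sequence of positive trace-class operators with Tr(A_i H₀) ≤ E for all i, converging in the Hilbert–Schmidt norm to a positive trace-class operator Ā with Tr(Ā H₀) ≤ E, and let C be a bounded operator. If Tr(A_i C) = c for every i, then Tr(Ā C) = c. (In contrast to the unbounded-operator case, for a bounded operator C the trace constraint is preserved exactly in the limit.) -/

import Mathlib

open Filter
open scoped ENNReal InnerProductSpace ComplexOrder

variable {H : Type*} [NormedAddCommGroup H] [InnerProductSpace ℂ H] [CompleteSpace H]

/-- The (squared) Hilbert–Schmidt norm of an operator, computed via the matrix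
elements in the orthonormal Hilbert basis `e`, valued in `[0,∞]`. -/
noncomputable def hsNormSq (e : HilbertBasis ℕ ℂ H) (A : H →L[ℂ] H) : ℝ≥0∞ :=
  ∑' p : ℕ × ℕ, (‖⟪e p.1, A (e p.2)⟫_ℂ‖₊ : ℝ≥0∞) ^ 2

/-- `A i → Ā` in the Hilbert–Schmidt norm. -/
def HSTendsto (e : HilbertBasis ℕ ℂ H) (A : ℕ → H →L[ℂ] H) (Abar : H →L[ℂ] H) : Prop :=
  Tendsto (fun i => hsNormSq e (A i - Abar)) atTop (nhds 0)

/-- An operator is Hilbert–Schmidt if its Hilbert–Schmidt norm is finite. -/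
def IsHilbertSchmidt (e : HilbertBasis ℕ ℂ H) (A : H →L[ℂ] H) : Prop :=
  hsNormSq e A < ⊤

/-- An operator is trace-class iff it is a product of two Hilbert–Schmidt operators. -/
def IsTraceClass (e : HilbertBasis ℕ ℂ H) (T : H →L[ℂ] H) : Prop :=
  ∃ B C : H →L[ℂ] H, IsHilbertSchmidt e B ∧ IsHilbertSchmidt e C ∧ T = B ∘L C

/-- The (complex) trace of a trace-class operator: `Σ_n ⟪e n, T (e n)⟫`. -/
noncomputable def traceC (e : HilbertBasis ℕ ℂ H) (T : H →L[ℂ] H) : ℂ :=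
  ∑' n : ℕ, ⟪e n, T (e n)⟫_ℂ

/-- `Tr(A H₀)` for the positive diagonal operator `H₀` with `H₀ e_n = E_n e_n`:
the sum `Σ_n E_n ⟪e n, A (e n)⟫`, valued in `[0,∞]`. -/
noncomputable def energyTrace (e : HilbertBasis ℕ ℂ H) (En : ℕ → ℝ) (A : H →L[ℂ] H) : ℝ≥0∞ :=
  ∑' n : ℕ, ENNReal.ofReal (En n * RCLike.re ⟪e n, A (e n)⟫_ℂ)

/-!
For a positive `T` write `S = √T`: the diagonal entries of `T` are `‖S eₙ‖²` and
`|⟪eₙ, T C eₙ⟫| ≤ ‖S eₙ‖ ‖S C eₙ‖`. By Cauchy–Schwarz the tail `∑_{n ≥ N} |⟪eₙ, T C eₙ⟫|` is at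
most `(∑_{n ≥ N} ‖S eₙ‖²)^{1/2} ‖C‖ (Tr T)^{1/2}`, and the energy bound gives
`∑_{n ≥ N} ‖S eₙ‖² ≤ E / E_N`. The traces `Tr Aᵢ` are eventually bounded (finitely many diagonal
entries converge, the rest is controlled by the energy), so the tails of the series `Tr(Aᵢ C)`
are small uniformly in `i`. Hilbert–Schmidt convergence gives convergence of every matrix entry,
hence of every term of the series, and uniformly small tails allow passing to the limit:
`Tr(Ā C) = lim Tr(Aᵢ C) = c`.
-/

open Topology Finset

namespace ENNReal

theorem tsum_mul_le_sqrt_mul_sqrt {ι : Type*} (f g : ι → ℝ≥0∞) :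
    ∑' i, f i * g i ≤ (∑' i, f i ^ 2) ^ (1 / 2 : ℝ) * (∑' i, g i ^ 2) ^ (1 / 2 : ℝ) := by
  rw [ENNReal.tsum_eq_iSup_sum]
  refine iSup_le fun s => ?_
  have hcs := ENNReal.inner_le_Lp_mul_Lq s f g Real.HolderConjugate.two_two
  simp only [ENNReal.rpow_two] at hcs
  refine hcs.trans ?_
  gcongr <;> exact ENNReal.sum_le_tsum s

theorem mul_tsum_nat_add_le {w : ℕ → ℝ≥0∞} (hw : Monotone w) (f : ℕ → ℝ≥0∞) (N : ℕ) :
    w N * ∑' n, f (n + N) ≤ ∑' n, w n * f n := by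
  rw [← ENNReal.tsum_mul_left]
  calc ∑' n, w N * f (n + N) ≤ ∑' n, w (n + N) * f (n + N) :=
        ENNReal.tsum_le_tsum fun n => by gcongr; exact hw (Nat.le_add_left N n)
    _ ≤ ∑' n, w n * f n := ENNReal.tsum_comp_le_tsum_of_injective (add_left_injective N) _

theorem tendsto_rpow_div_ofReal_mul {α : Type*} {l : Filter α} {u : α → ℝ}
    (hu : Tendsto u l atTop) {a β : ℝ≥0∞} (ha : a ≠ ∞) (hβ : β ≠ ∞) {p : ℝ} (hp : 0 < p) :
    Tendsto (fun x => (a / ENNReal.ofReal (u x)) ^ p * β) l (𝓝 0) := by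
  have hdiv : Tendsto (fun x => a / ENNReal.ofReal (u x)) l (𝓝 0) := by
    simpa using ENNReal.Tendsto.const_div (ENNReal.tendsto_ofReal_atTop.comp hu) (.inr ha)
  have hpow := ((ENNReal.continuous_rpow_const (y := p)).tendsto 0).comp hdiv
  rw [ENNReal.zero_rpow_of_pos hp] at hpow
  simpa using ENNReal.Tendsto.mul_const hpow (.inr hβ)

end ENNReal

theorem tendsto_tsum_of_tendsto_of_tail_le {ι E : Type*} [NormedAddCommGroup E] [CompleteSpace E]
    {l : Filter ι} {F : ι → ℕ → E} {g : ℕ → E} {b : ℕ → ℝ≥0∞}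
    (hF : ∀ n, Tendsto (F · n) l (𝓝 (g n))) (hb : Tendsto b atTop (𝓝 0))
    (hFb : ∀ᶠ i in l, ∀ N, ∑' n, ‖F i (n + N)‖ₑ ≤ b N) (hgb : ∀ N, ∑' n, ‖g (n + N)‖ₑ ≤ b N) :
    Tendsto (fun i => ∑' n, F i n) l (𝓝 (∑' n, g n)) := by
  obtain ⟨N₀, hN₀⟩ := (hb.eventually_lt_const zero_lt_one).exists
  have summable {f : ℕ → E} (hf : ∀ N, ∑' n, ‖f (n + N)‖ₑ ≤ b N) : Summable f :=
    (summable_nat_add_iff N₀).mp <| .of_enorm <|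
      ((hf N₀).trans_lt (hN₀.trans ENNReal.one_lt_top)).ne
  rw [tendsto_iff_edist_tendsto_0, ENNReal.tendsto_nhds_zero]
  intro ε hε
  have hε3 : 0 < ε / 3 := ENNReal.div_pos hε.ne' ENNReal.ofNat_ne_top
  obtain ⟨N, hN⟩ := (hb.eventually_le_const hε3).exists
  have hhead : Tendsto (fun i => ∑ n ∈ range N, F i n) l (𝓝 (∑ n ∈ range N, g n)) :=
    tendsto_finsetSum _ fun n _ => hF n
  filter_upwards [hFb, (tendsto_iff_edist_tendsto_0.mp hhead).eventually_le_const hε3]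
    with i hi hi_head
  rw [← (summable hi).sum_add_tsum_nat_add N, ← (summable hgb).sum_add_tsum_nat_add N,
    edist_eq_enorm_sub, add_sub_add_comm]
  calc ‖(∑ n ∈ range N, F i n - ∑ n ∈ range N, g n) + (∑' n, F i (n + N) - ∑' n, g (n + N))‖ₑ
      ≤ ‖∑ n ∈ range N, F i n - ∑ n ∈ range N, g n‖ₑ
          + (‖∑' n, F i (n + N)‖ₑ + ‖∑' n, g (n + N)‖ₑ) :=
        (enorm_add_le _ _).trans (add_le_add_right enorm_sub_le _)
    _ ≤ ε / 3 + (ε / 3 + ε / 3) := by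
        gcongr
        · rwa [← edist_eq_enorm_sub]
        · exact enorm_tsum_le_tsum_enorm.trans ((hi N).trans hN)
        · exact enorm_tsum_le_tsum_enorm.trans ((hgb N).trans hN)
    _ = ε := by rw [← add_assoc, ENNReal.add_thirds]

theorem HilbertBasis.tsum_enorm_inner_sq {ι 𝕜 E : Type*} [RCLike 𝕜] [NormedAddCommGroup E]
    [InnerProductSpace 𝕜 E] (b : HilbertBasis ι 𝕜 E) (x : E) :
    ∑' i, ‖⟪b i, x⟫_𝕜‖ₑ ^ 2 = ‖x‖ₑ ^ 2 := by
  have h := lp.hasSum_norm (p := 2) (by norm_num) (b.repr x)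
  simp only [b.repr_apply_apply, LinearIsometryEquiv.norm_map, ENNReal.toReal_ofNat,
    Real.rpow_two] at h
  simp only [← ofReal_norm, ← ENNReal.ofReal_pow (norm_nonneg _)]
  rw [← ENNReal.ofReal_tsum_of_nonneg (fun _ => by positivity) h.summable, h.tsum_eq]

section HilbertSchmidt

variable {V : Type*} [NormedAddCommGroup V] [InnerProductSpace ℂ V] (e : HilbertBasis ℕ ℂ V)

theorem hsNormSq_eq_tsum_enorm_apply_sq (A : V →L[ℂ] V) :
    hsNormSq e A = ∑' n, ‖A (e n)‖ₑ ^ 2 := by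
  rw [hsNormSq, ENNReal.tsum_prod', ENNReal.tsum_comm]
  exact tsum_congr fun n => e.tsum_enorm_inner_sq (A (e n))

theorem enorm_apply_sq_le_hsNormSq (A : V →L[ℂ] V) (n : ℕ) : ‖A (e n)‖ₑ ^ 2 ≤ hsNormSq e A :=
  hsNormSq_eq_tsum_enorm_apply_sq e A ▸ ENNReal.le_tsum n

theorem hsNormSq_comp_le_left (B A : V →L[ℂ] V) :
    hsNormSq e (B ∘L A) ≤ ‖B‖ₑ ^ 2 * hsNormSq e A := by
  simp only [hsNormSq_eq_tsum_enorm_apply_sq, ← ENNReal.tsum_mul_left, ← mul_pow]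
  exact ENNReal.tsum_le_tsum fun n => by gcongr; exact B.le_opENorm _

theorem HSTendsto.tendsto_apply {A : ℕ → V →L[ℂ] V} {Abar : V →L[ℂ] V} (h : HSTendsto e A Abar)
    (n : ℕ) : Tendsto (fun i => A i (e n)) atTop (𝓝 (Abar (e n))) := by
  rw [tendsto_iff_edist_tendsto_0]
  have hsq : Tendsto (fun i => edist (A i (e n)) (Abar (e n)) ^ 2) atTop (𝓝 0) :=
    tendsto_of_tendsto_of_tendsto_of_le_of_le tendsto_const_nhds h (fun _ => bot_le)
      fun i => by simpa [edist_eq_enorm_sub] using enorm_apply_sq_le_hsNormSq e (A i - Abar) n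
  have hsqrt := ((ENNReal.continuous_rpow_const (y := ((2 : ℕ) : ℝ)⁻¹)).tendsto 0).comp hsq
  simpa only [Function.comp_def, ENNReal.pow_rpow_inv_natCast two_ne_zero,
    ENNReal.zero_rpow_of_pos (by norm_num : (0 : ℝ) < ((2 : ℕ) : ℝ)⁻¹)] using hsqrt

end HilbertSchmidt

section HilbertSchmidtAdjoint

variable (e : HilbertBasis ℕ ℂ H)

open ContinuousLinearMap

theorem hsNormSq_adjoint (A : H →L[ℂ] H) : hsNormSq e (adjoint A) = hsNormSq e A := by
  rw [hsNormSq, ← (Equiv.prodComm ℕ ℕ).tsum_eq, hsNormSq]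
  refine tsum_congr fun p => ?_
  rw [Equiv.prodComm_apply, Prod.fst_swap, Prod.snd_swap, adjoint_inner_right,
    ← inner_conj_symm, RCLike.nnnorm_conj]

theorem hsNormSq_comp_le_right (A B : H →L[ℂ] H) :
    hsNormSq e (A ∘L B) ≤ ‖B‖ₑ ^ 2 * hsNormSq e A := by
  rw [← hsNormSq_adjoint, adjoint_comp, ← hsNormSq_adjoint e A]
  simpa [enorm_eq_nnnorm] using hsNormSq_comp_le_left e (adjoint B) (adjoint A)

theorem HSTendsto.adjoint {A : ℕ → H →L[ℂ] H} {Abar : H →L[ℂ] H} (h : HSTendsto e A Abar) :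
    HSTendsto e (fun i => adjoint (A i)) (adjoint Abar) := by
  simpa [HSTendsto, ← map_sub, hsNormSq_adjoint] using h

theorem HSTendsto.tendsto_inner_apply {A : ℕ → H →L[ℂ] H} {Abar : H →L[ℂ] H}
    (h : HSTendsto e A Abar) (n : ℕ) (y : H) :
    Tendsto (fun i => ⟪e n, A i y⟫_ℂ) atTop (𝓝 ⟪e n, Abar y⟫_ℂ) := by
  simp only [← adjoint_inner_left]
  exact ((h.adjoint e).tendsto_apply e n).inner tendsto_const_nhds

end HilbertSchmidtAdjoint

namespace ContinuousLinearMap.IsPositive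

variable {T : H →L[ℂ] H}

theorem inner_apply_eq_inner_sqrt (hT : T.IsPositive) (x y : H) :
    ⟪x, T y⟫_ℂ = ⟪CFC.sqrt T x, CFC.sqrt T y⟫_ℂ := by
  have hT0 : 0 ≤ T := (nonneg_iff_isPositive T).mpr hT
  have hsa : IsSelfAdjoint (CFC.sqrt T) := .of_nonneg (CFC.sqrt_nonneg T)
  conv_lhs => rw [← CFC.sqrt_mul_sqrt_self T hT0, mul_apply_eq_comp]
  exact (hsa.isSymmetric _ _).symm

theorem re_inner_apply_self (hT : T.IsPositive) (x : H) :
    RCLike.re ⟪x, T x⟫_ℂ = ‖CFC.sqrt T x‖ ^ 2 := by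
  rw [hT.inner_apply_eq_inner_sqrt, inner_self_eq_norm_sq]

end ContinuousLinearMap.IsPositive

open ContinuousLinearMap

section EnergyBounds

variable (e : HilbertBasis ℕ ℂ H) {En : ℕ → ℝ} {T : H →L[ℂ] H}

theorem energyTrace_eq_tsum (hEn0 : ∀ n, 0 ≤ En n) (hT : T.IsPositive) :
    energyTrace e En T = ∑' n, ENNReal.ofReal (En n) * ‖CFC.sqrt T (e n)‖ₑ ^ 2 := by
  refine tsum_congr fun n => ?_
  rw [hT.re_inner_apply_self, ENNReal.ofReal_mul (hEn0 n), ENNReal.ofReal_pow (norm_nonneg _),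
    ofReal_norm]

theorem tsum_enorm_sqrt_apply_nat_add_le (hEn0 : ∀ n, 0 ≤ En n) (hEnmono : Monotone En)
    (hT : T.IsPositive) {E : ℝ} (hE : 0 < E) (hTE : energyTrace e En T ≤ ENNReal.ofReal E)
    (N : ℕ) : ∑' n, ‖CFC.sqrt T (e (n + N))‖ₑ ^ 2 ≤ ENNReal.ofReal E / ENNReal.ofReal (En N) := by
  rw [ENNReal.le_div_iff_mul_le (.inr (ENNReal.ofReal_pos.mpr hE).ne') (.inl ENNReal.ofReal_ne_top),
    mul_comm]
  calc ENNReal.ofReal (En N) * ∑' n, ‖CFC.sqrt T (e (n + N))‖ₑ ^ 2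
      ≤ ∑' n, ENNReal.ofReal (En n) * ‖CFC.sqrt T (e n)‖ₑ ^ 2 :=
        ENNReal.mul_tsum_nat_add_le (ENNReal.ofReal_mono.comp hEnmono) _ N
    _ = energyTrace e En T := (energyTrace_eq_tsum e hEn0 hT).symm
    _ ≤ ENNReal.ofReal E := hTE

theorem hsNormSq_sqrt_le (hEn0 : ∀ n, 0 ≤ En n) (hEnmono : Monotone En)
    (hT : T.IsPositive) {E : ℝ} (hE : 0 < E) (hTE : energyTrace e En T ≤ ENNReal.ofReal E)
    (N : ℕ) : hsNormSq e (CFC.sqrt T)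
      ≤ ∑ n ∈ range N, ENNReal.ofReal (RCLike.re ⟪e n, T (e n)⟫_ℂ)
        + ENNReal.ofReal E / ENNReal.ofReal (En N) := by
  rw [hsNormSq_eq_tsum_enorm_apply_sq,
    ← Summable.sum_add_tsum_nat_add' (f := fun n => ‖CFC.sqrt T (e n)‖ₑ ^ 2) ENNReal.summable]
  refine add_le_add (Finset.sum_le_sum fun n _ => le_of_eq ?_) ?_
  · rw [hT.re_inner_apply_self, ENNReal.ofReal_pow (norm_nonneg _), ofReal_norm]
  · exact tsum_enorm_sqrt_apply_nat_add_le e hEn0 hEnmono hT hE hTE N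

theorem tsum_enorm_inner_comp_nat_add_le (hEn0 : ∀ n, 0 ≤ En n) (hEnmono : Monotone En)
    (hT : T.IsPositive) {E : ℝ} (hE : 0 < E) (hTE : energyTrace e En T ≤ ENNReal.ofReal E)
    {K : ℝ≥0∞} (hTK : hsNormSq e (CFC.sqrt T) ≤ K) (C : H →L[ℂ] H) (N : ℕ) :
    ∑' n, ‖⟪e (n + N), (T ∘L C) (e (n + N))⟫_ℂ‖ₑ
      ≤ (ENNReal.ofReal E / ENNReal.ofReal (En N)) ^ (1 / 2 : ℝ)
        * (‖C‖ₑ ^ 2 * K) ^ (1 / 2 : ℝ) := by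
  set S := CFC.sqrt T
  calc ∑' n, ‖⟪e (n + N), (T ∘L C) (e (n + N))⟫_ℂ‖ₑ
      ≤ ∑' n, ‖S (e (n + N))‖ₑ * ‖(S ∘L C) (e (n + N))‖ₑ :=
        ENNReal.tsum_le_tsum fun n => by
          rw [comp_apply, comp_apply, hT.inner_apply_eq_inner_sqrt]
          simpa only [enorm_eq_nnnorm, ← ENNReal.coe_mul, ENNReal.coe_le_coe] using
            nnnorm_inner_le_nnnorm (𝕜 := ℂ) _ _
    _ ≤ (∑' n, ‖S (e (n + N))‖ₑ ^ 2) ^ (1 / 2 : ℝ)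
          * (∑' n, ‖(S ∘L C) (e (n + N))‖ₑ ^ 2) ^ (1 / 2 : ℝ) :=
        ENNReal.tsum_mul_le_sqrt_mul_sqrt _ _
    _ ≤ _ := by
        gcongr
        · exact tsum_enorm_sqrt_apply_nat_add_le e hEn0 hEnmono hT hE hTE N
        calc ∑' n, ‖(S ∘L C) (e (n + N))‖ₑ ^ 2 ≤ ∑' n, ‖(S ∘L C) (e n)‖ₑ ^ 2 :=
              ENNReal.tsum_comp_le_tsum_of_injective (add_left_injective N) _
          _ = hsNormSq e (S ∘L C) := (hsNormSq_eq_tsum_enorm_apply_sq e _).symm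
          _ ≤ ‖C‖ₑ ^ 2 * hsNormSq e S := hsNormSq_comp_le_right e S C
          _ ≤ ‖C‖ₑ ^ 2 * K := by gcongr

theorem exists_hsNormSq_sqrt_le_of_hsTendsto (hEn0 : ∀ n, 0 ≤ En n) (hEnmono : Monotone En)
    (hEntop : Tendsto En atTop atTop) {E : ℝ} (hE : 0 < E) {A : ℕ → H →L[ℂ] H} {Abar : H →L[ℂ] H}
    (hApos : ∀ i, (A i).IsPositive) (hAE : ∀ i, energyTrace e En (A i) ≤ ENNReal.ofReal E)
    (hAbarpos : Abar.IsPositive) (hAbarE : energyTrace e En Abar ≤ ENNReal.ofReal E)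
    (hlim : HSTendsto e A Abar) :
    ∃ K ≠ ∞, (∀ᶠ i in atTop, hsNormSq e (CFC.sqrt (A i)) ≤ K) ∧
      hsNormSq e (CFC.sqrt Abar) ≤ K := by
  obtain ⟨N, hN⟩ := (hEntop.eventually_gt_atTop 0).exists
  set head : (H →L[ℂ] H) → ℝ≥0∞ := fun T =>
    ∑ n ∈ range N, ENNReal.ofReal (RCLike.re ⟪e n, T (e n)⟫_ℂ)
  have hhead : Tendsto (fun i => head (A i)) atTop (𝓝 (head Abar)) :=
    tendsto_finsetSum _ fun n _ => (ENNReal.continuous_ofReal.tendsto _).comp <|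
      (RCLike.continuous_re.tendsto _).comp (hlim.tendsto_inner_apply e n (e n))
  have hhead_ne_top : head Abar ≠ ∞ := ENNReal.sum_ne_top.mpr fun _ _ => ENNReal.ofReal_ne_top
  refine ⟨head Abar + 1 + ENNReal.ofReal E / ENNReal.ofReal (En N), ?_, ?_, ?_⟩
  · exact ENNReal.add_ne_top.mpr ⟨ENNReal.add_ne_top.mpr ⟨hhead_ne_top, ENNReal.one_ne_top⟩,
      ENNReal.div_ne_top ENNReal.ofReal_ne_top (ENNReal.ofReal_pos.mpr hN).ne'⟩
  · filter_upwards [hhead.eventually_le_const (ENNReal.lt_add_right hhead_ne_top one_ne_zero)]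
      with i hi
    exact (hsNormSq_sqrt_le e hEn0 hEnmono (hApos i) hE (hAE i) N).trans (by gcongr)
  · exact (hsNormSq_sqrt_le e hEn0 hEnmono hAbarpos hE hAbarE N).trans
      (by gcongr; exact le_self_add)

end EnergyBounds

theorem trace_constraint_preserved_in_limit_general
    (e : HilbertBasis ℕ ℂ H) (En : ℕ → ℝ)
    (hEn0 : ∀ n, 0 ≤ En n) (hEnmono : Monotone En) (hEntop : Tendsto En atTop atTop)
    (E : ℝ) (hE : 0 < E)
    (A : ℕ → H →L[ℂ] H) (Abar : H →L[ℂ] H) (C : H →L[ℂ] H) (c : ℂ)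
    (hApos : ∀ i, (A i).IsPositive)
    (hAE : ∀ i, energyTrace e En (A i) ≤ ENNReal.ofReal E)
    (hAbarpos : Abar.IsPositive)
    (hAbarE : energyTrace e En Abar ≤ ENNReal.ofReal E)
    (hlim : HSTendsto e A Abar)
    (hconstraint : ∀ i, traceC e (A i ∘L C) = c) :
    traceC e (Abar ∘L C) = c := by
  obtain ⟨K, hK, hAK, hAbarK⟩ := exists_hsNormSq_sqrt_le_of_hsTendsto e hEn0 hEnmono hEntop hE
    hApos hAE hAbarpos hAbarE hlim
  have htail_bound := ENNReal.tendsto_rpow_div_ofReal_mul hEntop (a := ENNReal.ofReal E)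
    ENNReal.ofReal_ne_top (β := (‖C‖ₑ ^ 2 * K) ^ (1 / 2 : ℝ))
    (ENNReal.rpow_ne_top_of_nonneg (by norm_num) (ENNReal.mul_ne_top (by simp) hK))
    (by norm_num : (0 : ℝ) < 1 / 2)
  have hlimit := tendsto_tsum_of_tendsto_of_tail_le
    (fun n => hlim.tendsto_inner_apply e n (C (e n))) htail_bound
    (hAK.mono fun i hAiK =>
      tsum_enorm_inner_comp_nat_add_le e hEn0 hEnmono (hApos i) hE (hAE i) hAiK C)
    (tsum_enorm_inner_comp_nat_add_le e hEn0 hEnmono hAbarpos hE hAbarE hAbarK C)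
  exact tendsto_nhds_unique hlimit (tendsto_const_nhds.congr fun i => (hconstraint i).symm)

/-- for a *bounded* operator `C`, trace constraints are preserved exactly
in the Hilbert–Schmidt limit.  If positive trace-class operators `A i` with
`Tr(A i · H₀) ≤ E` converge in Hilbert–Schmidt norm to a positive trace-class `Ā`
with `Tr(Ā H₀) ≤ E`, and `Tr(A i · C) = c` for every `i`, then `Tr(Ā C) = c`. -/
theorem trace_constraint_preserved_in_limit
    (e : HilbertBasis ℕ ℂ H) (En : ℕ → ℝ)
    (hEn0 : ∀ n, 0 ≤ En n) (hEnmono : Monotone En) (hEntop : Tendsto En atTop atTop)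
    (E : ℝ) (hE : 0 < E)
    (A : ℕ → H →L[ℂ] H) (Abar : H →L[ℂ] H) (C : H →L[ℂ] H) (c : ℂ)
    (hApos : ∀ i, (A i).IsPositive) (hAtc : ∀ i, IsTraceClass e (A i))
    (hAE : ∀ i, energyTrace e En (A i) ≤ ENNReal.ofReal E)
    (hAbarpos : Abar.IsPositive) (hAbartc : IsTraceClass e Abar)
    (hAbarE : energyTrace e En Abar ≤ ENNReal.ofReal E)
    (hlim : HSTendsto e A Abar)
    (hconstraint : ∀ i, traceC e (A i ∘L C) = c) :
    traceC e (Abar ∘L C) = c :=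
  trace_constraint_preserved_in_limit_general e En hEn0 hEnmono hEntop E hE A Abar C c hApos hAE
    hAbarpos hAbarE hlim hconstraint
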